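/- Fix integers p ≥ 1, r ≥ 1, k ≥ 1, m ≥ 1 and mutually disjoint subsets C_1,…,C_p of {1,2,…,m} with |C_1|+⋯+|C_{p−1}| < k ≤ |C_1|+⋯+|C_p|, and set u = |C_1|+⋯+|C_p| − k. Let B_1,…,B_r be mutually disjoint nonempty subsets of {1,2,…,k} such that B_i ⊆ C_1 ∪ ⋯ ∪ C_{min(i,p)} for all 1 ≤ i ≤ r and B_1 ∪ ⋯ ∪ B_r = {1,2,…,k}. Then |B_1| + 2|B_2| + ⋯ + r|B_r| = |C_1| + 2|C_2| + ⋯ + (p−1)|C_{p−1}| + p(|C_p| − u) holds if and only if r = p, B_i = C_i for all 1 ≤ i ≤ r−1, and B_r ⊆ C_r. -/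

import Mathlib

open Finset Polynomial LaurentPolynomial

attribute [local instance] Classical.propDecidable

/-- The value `π_i` of the word of `π` at the 1-based position `i` (values in `{1, …, m}`). -/
def wordAt (m : ℕ) (π : Equiv.Perm (Fin m)) (i : ℕ) : ℕ :=
  if h : i - 1 < m then ((π ⟨i - 1, h⟩ : Fin m) : ℕ) + 1 else 0

/-- The descent set `Des(π) ⊆ {1, …, m-1}` (1-based positions). -/
def DesSet (m : ℕ) (π : Equiv.Perm (Fin m)) : Finset ℕ :=
  (Finset.Ico 1 m).filter fun i => wordAt m π (i + 1) < wordAt m π i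

/-- The number of descents `des(π)`. -/
def desNum (m : ℕ) (π : Equiv.Perm (Fin m)) : ℕ := (DesSet m π).card

/-- The major index `maj(π)`. -/
def majIdx (m : ℕ) (π : Equiv.Perm (Fin m)) : ℕ := ∑ i ∈ DesSet m π, i

/-- The partial order `P` on `{1,…,m}` (encoded as `Fin m`) is naturally labeled:
`x ≤_P y` implies `x ≤ y` as integers. -/
def NatLabeled (m : ℕ) (P : PartialOrder (Fin m)) : Prop :=
  ∀ x y : Fin m, P.le x y → x ≤ y

/-- `π` is a linear extension of `P`: `π_i ≤_P π_j` implies `i ≤ j`. -/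
def IsLinExt (m : ℕ) (P : PartialOrder (Fin m)) (π : Equiv.Perm (Fin m)) : Prop :=
  ∀ i j : Fin m, P.le (π i) (π j) → i ≤ j

/-- `mc(x)`: the maximum number of elements of a chain of `P` whose largest element is `x`. -/
noncomputable def mc (m : ℕ) (P : PartialOrder (Fin m)) (x : Fin m) : ℕ :=
  sSup {k : ℕ | ∃ s : Finset (Fin m),
    s.card = k ∧ IsChain P.le ↑s ∧ x ∈ s ∧ ∀ y ∈ s, P.le y x}

/-- `m̄c(x)`: the maximum number of elements of a chain of `P` whose smallest element is `x`. -/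
noncomputable def mcUp (m : ℕ) (P : PartialOrder (Fin m)) (x : Fin m) : ℕ :=
  sSup {k : ℕ | ∃ s : Finset (Fin m),
    s.card = k ∧ IsChain P.le ↑s ∧ x ∈ s ∧ ∀ y ∈ s, P.le x y}

/-- The `q`-integer `[n]_q` for `n ∈ ℤ`, as a Laurent polynomial:
`[n]_q = 1 + q + ⋯ + q^{n-1}` for `n ≥ 0` and `[-n]_q = -q^{-n} [n]_q`. -/
noncomputable def qInt (n : ℤ) : LaurentPolynomial ℤ :=
  if 0 ≤ n then ∑ i ∈ Finset.range n.toNat, T (i : ℤ)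
  else -(T n * ∑ i ∈ Finset.range (-n).toNat, T (i : ℤ))

/-- The polynomial `F_P(q,x) = Σ_{π ∈ L(P)} q^{maj π} Π_{i=1}^m ([i - des π]_q + q^{i - des π} x)`,
an element of `(ℤ[q,q⁻¹])[x]` (it in fact lies in `ℤ[q,x]`). -/
noncomputable def Fpoly (m : ℕ) (P : PartialOrder (Fin m)) : Polynomial (LaurentPolynomial ℤ) :=
  ∑ π ∈ Finset.univ.filter (fun π => IsLinExt m P π),
    Polynomial.C (T (majIdx m π : ℤ)) *
      ∏ i ∈ Finset.Icc 1 m,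
        (Polynomial.C (qInt ((i : ℤ) - desNum m π)) +
          Polynomial.C (T ((i : ℤ) - desNum m π)) * Polynomial.X)

/-- The Newton polygon of an element of `(ℤ[q,q⁻¹])[x]`, in the `(q,x)`-plane. -/
noncomputable def NTL (f : Polynomial (LaurentPolynomial ℤ)) : Set (ℝ × ℝ) :=
  convexHull ℝ {p : ℝ × ℝ | ∃ (i : ℤ) (k : ℕ), ((f.coeff k).coeff i) ≠ 0 ∧ p = ((i : ℝ), (k : ℝ))}

/-- The Newton polygon of an element of `ℤ[q][x]`, in the `(q,x)`-plane. -/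
noncomputable def NTP (f : Polynomial (Polynomial ℤ)) : Set (ℝ × ℝ) :=
  convexHull ℝ {p : ℝ × ℝ | ∃ (i k : ℕ), (f.coeff k).coeff i ≠ 0 ∧ p = ((i : ℝ), (k : ℝ))}

/-- The polygon `C(a_1,…,a_m;h)`: the convex hull of `(0,0)`, `(a_1+⋯+a_i, i)` for
`1 ≤ i ≤ m`, `(h,m)` and `(h-m,0)`. -/
noncomputable def Cpolygon (m : ℕ) (a : ℕ → ℕ) (h : ℕ) : Set (ℝ × ℝ) :=
  convexHull ℝ ({((0 : ℝ), (0 : ℝ)), ((h : ℝ), (m : ℝ)), ((h : ℝ) - (m : ℝ), (0 : ℝ))} ∪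
    {p : ℝ × ℝ | ∃ i ∈ Finset.Icc 1 m, p = ((∑ j ∈ Finset.Icc 1 i, (a j : ℝ)), (i : ℝ))})

/-- The index of the descent block of `π` containing the 1-based position `j`. -/
def blockIdx (m : ℕ) (π : Equiv.Perm (Fin m)) (j : ℕ) : ℕ :=
  1 + ((Finset.Ico 1 j).filter (fun i => i ∉ DesSet m π)).card

/-- `DB_i(π)`: the set of entries of the `i`-th descent block of `π`. -/
def DB (m : ℕ) (π : Equiv.Perm (Fin m)) (i : ℕ) : Finset (Fin m) :=
  Finset.univ.filter fun x => blockIdx m π (((π.symm x : Fin m) : ℕ) + 1) = i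

/-- `PP(P,n)`: the set of `P`-partitions (order-reversing maps) with all parts at most `n`,
encoded as functions `Fin m → Fin (n+1)`. -/
noncomputable def PPset (m : ℕ) (P : PartialOrder (Fin m)) (n : ℕ) :
    Finset (Fin m → Fin (n + 1)) :=
  Finset.univ.filter fun σ => ∀ x y : Fin m, P.le x y → σ y ≤ σ x

/-- `|σ| = σ(1) + ⋯ + σ(m)`. -/
def sizePP (m n : ℕ) (σ : Fin m → Fin (n + 1)) : ℕ := ∑ i : Fin m, (σ i : ℕ)

/-- The `q`-integer `[n]_q` for `n ∈ ℕ`, as an ordinary polynomial in `q`. -/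
noncomputable def qIntP (n : ℕ) : Polynomial ℤ := ∑ i ∈ Finset.range n, Polynomial.X ^ i

/-- The `q`-factorial `[n]_q!`. -/
noncomputable def qFact (n : ℕ) : Polynomial ℤ := ∏ i ∈ Finset.Icc 1 n, qIntP i

/-- The dual poset `P̄` : `x ≤_{P̄} y` iff `y ≤_P x`. -/
def dualP (m : ℕ) (P : PartialOrder (Fin m)) : PartialOrder (Fin m) where
  le x y := P.le y x
  lt x y := P.lt y x
  le_refl x := P.le_refl x
  le_trans a b c h1 h2 := P.le_trans c b a h2 h1
  le_antisymm a b h1 h2 := P.le_antisymm a b h2 h1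
  lt_iff_le_not_ge a b := P.lt_iff_le_not_ge b a

/-- The canonical ring map `ℤ[q] → ℚ(q)`. -/
noncomputable def toRF : Polynomial ℤ →+* RatFunc ℚ :=
  (algebraMap (Polynomial ℚ) (RatFunc ℚ)).comp (Polynomial.mapRingHom (Int.castRingHom ℚ))

/-- `W(n·O(P), q) = Σ_σ q^{|σ|}`, the sum being over all order-preserving maps
`σ : P → {0,…,n}`. -/
noncomputable def Wpoly (m : ℕ) (P : PartialOrder (Fin m)) (n : ℕ) : Polynomial ℤ :=
  ∑ σ ∈ (Finset.univ.filter fun σ : Fin m → Fin (n + 1) =>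
      ∀ x y : Fin m, P.le x y → σ x ≤ σ y),
    Polynomial.X ^ (∑ i : Fin m, (σ i : ℕ))

/-- The polynomial `q^{mj - s(s-1)/2} Π_{i=1}^{s-1} (x - [i]_q) Π_{i=1}^{m-s} (q^i x + [i]_q)`. -/
noncomputable def tSummand (m s mj : ℕ) : Polynomial (LaurentPolynomial ℤ) :=
  Polynomial.C (T ((mj : ℤ) - (s * (s - 1) / 2 : ℕ))) *
    (∏ i ∈ Finset.Icc 1 (s - 1), (Polynomial.X - Polynomial.C (qInt (i : ℤ)))) *
    ∏ i ∈ Finset.Icc 1 (m - s),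
      (Polynomial.C (T (i : ℤ)) * Polynomial.X + Polynomial.C (qInt (i : ℤ)))

/-- `t(π,k)`: the coefficient of `x^{k-1}` in
`q^{maj π - s(s-1)/2} Π_{i=1}^{s-1} (x - [i]_q) Π_{i=1}^{m-s} (q^i x + [i]_q)`,
where `s = des π`. -/
noncomputable def tpoly (m : ℕ) (π : Equiv.Perm (Fin m)) (k : ℕ) : LaurentPolynomial ℤ :=
  (tSummand m (desNum m π) (majIdx m π)).coeff (k - 1)

/-- The polynomial `A(q,x) = Π_{i=1}^m (q^i x + [i]_q)`. -/
noncomputable def Apoly (m : ℕ) : Polynomial (LaurentPolynomial ℤ) :=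
  ∏ i ∈ Finset.Icc 1 m,
    (Polynomial.C (T (i : ℤ)) * Polynomial.X + Polynomial.C (qInt (i : ℤ)))

/-- The polynomial `B(q,x) = x Σ_{π ∈ L(P), des π ≥ 1} q^{maj π - s(s-1)/2}
Π_{i=1}^{s-1} (x - [i]_q) Π_{i=1}^{m-s} (q^i x + [i]_q)`, where `s = des π`;
one has `F_P(q,x) = A(q,x) + B(q,x)`. -/
noncomputable def Bpoly (m : ℕ) (P : PartialOrder (Fin m)) : Polynomial (LaurentPolynomial ℤ) :=
  Polynomial.X *
    ∑ π ∈ Finset.univ.filter (fun π => IsLinExt m P π ∧ 1 ≤ desNum m π),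
      tSummand m (desNum m π) (majIdx m π)

/-!
Write `S j = |B_1| + ⋯ + |B_j|` and `T j = |C_1| + ⋯ + |C_j|`. Summation by parts turns the left
side into `r k - ∑_{j<r} S j` and the right side into `p k - ∑_{j<p} T j`. Since
`B_1 ∪ ⋯ ∪ B_j ⊆ C_1 ∪ ⋯ ∪ C_j` with both unions disjoint, `S j ≤ T j`; this forces `p ≤ r`, and
as the blocks are nonempty, `S j < k` for `j < r`. Hence the left side exceeds the right one unless
`r = p` and `S j = T j` for all `j < p`. Equal partial sums make the prefix unions coincide, and
each block is the difference of two consecutive prefix unions.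
-/

namespace DescentBlocks

theorem sum_Icc_mul_add_sum_range_partialSum (b : ℕ → ℕ) (n : ℕ) :
    ∑ i ∈ Icc 1 n, i * b i + ∑ j ∈ range n, ∑ i ∈ Icc 1 j, b i =
      n * ∑ i ∈ Icc 1 n, b i := by
  induction n with
  | zero => simp
  | succ n ih =>
    rw [sum_Icc_succ_top (by omega), sum_range_succ, sum_Icc_succ_top (by omega)]
    linarith [ih]

theorem sum_Icc_mul_add_mul_sub_add_sum_range_partialSum (c : ℕ → ℕ) {q k : ℕ}
    (hk : ∑ i ∈ Icc 1 q, c i ≤ k) :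
    ∑ i ∈ Icc 1 q, i * c i + (q + 1) * (k - ∑ i ∈ Icc 1 q, c i) +
      ∑ j ∈ range (q + 1), ∑ i ∈ Icc 1 j, c i = (q + 1) * k := by
  have hk' : (q + 1) * k =
      (q + 1) * ∑ i ∈ Icc 1 q, c i + (q + 1) * (k - ∑ i ∈ Icc 1 q, c i) := by
    rw [← mul_add, Nat.add_sub_cancel' hk]
  rw [sum_range_succ, hk']
  linarith [sum_Icc_mul_add_sum_range_partialSum c q]

/-- `L = r k - ∑_{j<r} S j` and `R = p k - ∑_{j<p} T j`; each index `j ∈ [p, r)` contributes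
`k - S j ≥ 1` to `L - R`. -/
theorem eq_iff_of_add_sum_range_eq {S T : ℕ → ℕ} {p r k L R : ℕ} (hpr : p ≤ r)
    (hST : ∀ j < p, S j ≤ T j) (hSk : ∀ j < r, S j < k)
    (hL : L + ∑ j ∈ range r, S j = r * k) (hR : R + ∑ j ∈ range p, T j = p * k) :
    L = R ↔ r = p ∧ ∀ j < p, S j = T j := by
  have hle : ∑ j ∈ range p, S j ≤ ∑ j ∈ range p, T j :=
    sum_le_sum fun j hj => hST j (mem_range.mp hj)
  have htail : ∑ j ∈ Ico p r, (S j + 1) ≤ (r - p) * k := by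
    simpa using sum_le_card_nsmul (Ico p r) (fun j => S j + 1) k
      fun j hj => hSk j (mem_Ico.mp hj).2
  have hsplit := sum_range_add_sum_Ico S hpr
  have hrk : r * k = p * k + (r - p) * k := by rw [← add_mul, Nat.add_sub_cancel' hpr]
  rw [sum_add_distrib, sum_const, Nat.card_Ico, smul_eq_mul, mul_one] at htail
  constructor
  · intro hLR
    obtain rfl : r = p := by
      by_contra hne
      have : 1 ≤ r - p := by omega
      linarith
    refine ⟨rfl, fun j hj => ?_⟩
    have hsum : ∑ j ∈ range r, S j = ∑ j ∈ range r, T j := by linarith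
    exact (sum_eq_sum_iff_of_le fun j hj => hST j (mem_range.mp hj)).mp hsum j (mem_range.mpr hj)
  · rintro ⟨rfl, h⟩
    have hsum : ∑ j ∈ range r, S j = ∑ j ∈ range r, T j :=
      sum_congr rfl fun j hj => h j (mem_range.mp hj)
    linarith

section PrefixUnions

variable {α : Type*}

theorem sum_card_Icc_one_lt {F : ℕ → Finset α} {n j : ℕ}
    (hF : ∀ i ∈ Icc 1 n, (F i).Nonempty) (hj : j < n) :
    ∑ i ∈ Icc 1 j, (F i).card < ∑ i ∈ Icc 1 n, (F i).card := by
  have hmem : j + 1 ∈ Icc 1 n := by simp; omega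
  exact sum_lt_sum_of_subset (Icc_subset_Icc_right hj.le) hmem (by simp)
    (card_pos.mpr (hF _ hmem)) fun _ _ _ => Nat.zero_le _

variable [DecidableEq α]

theorem card_biUnion_Icc_one {F : ℕ → Finset α} {n j : ℕ}
    (hF : (↑(Icc 1 n) : Set ℕ).PairwiseDisjoint F) (hj : j ≤ n) :
    ((Icc 1 j).biUnion F).card = ∑ i ∈ Icc 1 j, (F i).card :=
  card_biUnion (hF.subset (coe_subset.mpr (Icc_subset_Icc_right hj)))

theorem biUnion_Icc_one_succ_sdiff {F : ℕ → Finset α} {n j : ℕ}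
    (hF : (↑(Icc 1 n) : Set ℕ).PairwiseDisjoint F) (hj : j + 1 ≤ n) :
    (Icc 1 (j + 1)).biUnion F \ (Icc 1 j).biUnion F = F (j + 1) := by
  rw [← insert_Icc_right_eq_Icc_add_one (by omega), biUnion_insert, union_comm]
  refine union_sdiff_cancel_left ((disjoint_biUnion_left _ _ _).mpr fun i hi => ?_)
  have hi := mem_Icc.mp hi
  exact hF (by simp; omega) (by simp; omega) (by omega)

theorem biUnion_Icc_one_subset_min {F G : ℕ → Finset α} {n m j : ℕ}
    (h : ∀ i ∈ Icc 1 n, F i ⊆ (Icc 1 (min i m)).biUnion G) (hj : j ≤ n) :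
    (Icc 1 j).biUnion F ⊆ (Icc 1 (min j m)).biUnion G :=
  biUnion_subset.mpr fun i hi => by
    have hi := mem_Icc.mp hi
    exact (h i (mem_Icc.mpr ⟨hi.1, hi.2.trans hj⟩)).trans
      (biUnion_subset_biUnion_of_subset_left G (Icc_subset_Icc_right (min_le_min_right m hi.2)))

theorem sum_card_Icc_one_le_min {F G : ℕ → Finset α} {n m j : ℕ}
    (hF : (↑(Icc 1 n) : Set ℕ).PairwiseDisjoint F) (hG : (↑(Icc 1 m) : Set ℕ).PairwiseDisjoint G)
    (h : ∀ i ∈ Icc 1 n, F i ⊆ (Icc 1 (min i m)).biUnion G) (hj : j ≤ n) :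
    ∑ i ∈ Icc 1 j, (F i).card ≤ ∑ i ∈ Icc 1 (min j m), (G i).card := by
  rw [← card_biUnion_Icc_one hF hj, ← card_biUnion_Icc_one hG (min_le_right _ _)]
  exact card_le_card (biUnion_Icc_one_subset_min h hj)

theorem forall_sum_card_eq_iff {F G : ℕ → Finset α} {n : ℕ}
    (hF : (↑(Icc 1 (n + 1)) : Set ℕ).PairwiseDisjoint F)
    (hG : (↑(Icc 1 (n + 1)) : Set ℕ).PairwiseDisjoint G)
    (hFG : ∀ j ≤ n + 1, (Icc 1 j).biUnion F ⊆ (Icc 1 j).biUnion G) :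
    (∀ j < n + 1, ∑ i ∈ Icc 1 j, (F i).card = ∑ i ∈ Icc 1 j, (G i).card) ↔
      (∀ i ∈ Icc 1 n, F i = G i) ∧ F (n + 1) ⊆ G (n + 1) := by
  constructor
  · intro h
    have hU : ∀ j < n + 1, (Icc 1 j).biUnion F = (Icc 1 j).biUnion G := fun j hj =>
      eq_of_subset_of_card_le (hFG j hj.le) (by
        rw [card_biUnion_Icc_one hF hj.le, card_biUnion_Icc_one hG hj.le, h j hj])
    refine ⟨fun i hi => ?_, ?_⟩
    · obtain ⟨j, rfl⟩ : ∃ j, i = j + 1 := ⟨i - 1, by simp at hi; omega⟩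
      have hj : j + 1 ≤ n := (mem_Icc.mp hi).2
      rw [← biUnion_Icc_one_succ_sdiff hF (by omega), ← biUnion_Icc_one_succ_sdiff hG (by omega),
        hU j (by omega), hU (j + 1) (by omega)]
    · rw [← biUnion_Icc_one_succ_sdiff hF le_rfl, ← biUnion_Icc_one_succ_sdiff hG le_rfl,
        hU n (by omega)]
      exact sdiff_subset_sdiff (hFG (n + 1) le_rfl) le_rfl
  · rintro ⟨h, -⟩ j hj
    exact sum_congr rfl fun i hi => by rw [h i (by simp at hi ⊢; omega)]

end PrefixUnions

end DescentBlocks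

open DescentBlocks

theorem statement7_general (p r k : ℕ) (hp : 1 ≤ p)
    (C : ℕ → Finset ℕ)
    (hCdisj : ∀ i ∈ Finset.Icc 1 p, ∀ j ∈ Finset.Icc 1 p, i ≠ j → Disjoint (C i) (C j))
    (hk1 : ∑ i ∈ Finset.Icc 1 (p - 1), (C i).card < k)
    (hk2 : k ≤ ∑ i ∈ Finset.Icc 1 p, (C i).card)
    (u : ℕ) (hu : u = (∑ i ∈ Finset.Icc 1 p, (C i).card) - k)
    (B : ℕ → Finset ℕ)
    (hBne : ∀ i ∈ Finset.Icc 1 r, (B i).Nonempty)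
    (hBdisj : ∀ i ∈ Finset.Icc 1 r, ∀ j ∈ Finset.Icc 1 r, i ≠ j → Disjoint (B i) (B j))
    (hBC : ∀ i ∈ Finset.Icc 1 r, B i ⊆ (Finset.Icc 1 (min i p)).biUnion C)
    (hcover : (Finset.Icc 1 r).biUnion B = Finset.Icc 1 k) :
    (∑ i ∈ Finset.Icc 1 r, i * (B i).card =
        (∑ i ∈ Finset.Icc 1 (p - 1), i * (C i).card) + p * ((C p).card - u)) ↔
      (r = p ∧ (∀ i ∈ Finset.Icc 1 (r - 1), B i = C i) ∧ B r ⊆ C r) := by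
  obtain ⟨q, rfl⟩ : ∃ q, p = q + 1 := ⟨p - 1, by omega⟩
  rw [Nat.add_sub_cancel] at hk1 ⊢
  have hB : (↑(Icc 1 r) : Set ℕ).PairwiseDisjoint B := hBdisj
  have hC : (↑(Icc 1 (q + 1)) : Set ℕ).PairwiseDisjoint C := hCdisj
  have hSr : ∑ i ∈ Icc 1 r, (B i).card = k := by
    rw [← card_biUnion_Icc_one hB le_rfl, hcover, Nat.card_Icc, Nat.add_sub_cancel]
  have hpr : q + 1 ≤ r := by
    by_contra! hrq
    have hSrT := sum_card_Icc_one_le_min hB hC hBC le_rfl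
    have hTmono : ∑ i ∈ Icc 1 r, (C i).card ≤ ∑ i ∈ Icc 1 q, (C i).card :=
      sum_le_sum_of_subset (Icc_subset_Icc_right (by omega))
    rw [min_eq_left hrq.le, hSr] at hSrT
    omega
  have hCq : (C (q + 1)).card - u = k - ∑ i ∈ Icc 1 q, (C i).card := by
    have hTq := sum_Icc_succ_top (by omega : 1 ≤ q + 1) fun i => (C i).card
    omega
  have hST : ∀ j < q + 1, ∑ i ∈ Icc 1 j, (B i).card ≤ ∑ i ∈ Icc 1 j, (C i).card := fun j hj => by
    simpa only [min_eq_left hj.le] using sum_card_Icc_one_le_min hB hC hBC (by omega : j ≤ r)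
  rw [eq_iff_of_add_sum_range_eq hpr hST
    (fun j hj => hSr ▸ sum_card_Icc_one_lt hBne hj)
    (by rw [← hSr]; exact sum_Icc_mul_add_sum_range_partialSum _ r)
    (by rw [hCq]; exact sum_Icc_mul_add_mul_sub_add_sum_range_partialSum _ hk1.le)]
  refine and_congr_right fun hr => ?_
  subst hr
  rw [Nat.add_sub_cancel]
  refine forall_sum_card_eq_iff hB hC fun j hj => ?_
  simpa only [min_eq_left hj] using biUnion_Icc_one_subset_min hBC hj

theorem statement7 (p r k m : ℕ) (hp : 1 ≤ p) (hr : 1 ≤ r) (hk : 1 ≤ k) (hm : 1 ≤ m)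
    (C : ℕ → Finset ℕ)
    (hCsub : ∀ i ∈ Finset.Icc 1 p, C i ⊆ Finset.Icc 1 m)
    (hCdisj : ∀ i ∈ Finset.Icc 1 p, ∀ j ∈ Finset.Icc 1 p, i ≠ j → Disjoint (C i) (C j))
    (hk1 : ∑ i ∈ Finset.Icc 1 (p - 1), (C i).card < k)
    (hk2 : k ≤ ∑ i ∈ Finset.Icc 1 p, (C i).card)
    (u : ℕ) (hu : u = (∑ i ∈ Finset.Icc 1 p, (C i).card) - k)
    (B : ℕ → Finset ℕ)
    (hBsub : ∀ i ∈ Finset.Icc 1 r, B i ⊆ Finset.Icc 1 k)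
    (hBne : ∀ i ∈ Finset.Icc 1 r, (B i).Nonempty)
    (hBdisj : ∀ i ∈ Finset.Icc 1 r, ∀ j ∈ Finset.Icc 1 r, i ≠ j → Disjoint (B i) (B j))
    (hBC : ∀ i ∈ Finset.Icc 1 r, B i ⊆ (Finset.Icc 1 (min i p)).biUnion C)
    (hcover : (Finset.Icc 1 r).biUnion B = Finset.Icc 1 k) :
    (∑ i ∈ Finset.Icc 1 r, i * (B i).card =
        (∑ i ∈ Finset.Icc 1 (p - 1), i * (C i).card) + p * ((C p).card - u)) ↔
      (r = p ∧ (∀ i ∈ Finset.Icc 1 (r - 1), B i = C i) ∧ B r ⊆ C r) :=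
  statement7_general p r k hp C hCdisj hk1 hk2 u hu B hBne hBdisj hBC hcover
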